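/- (Asymptotic-preserving property: the formal ε → 0 limit scheme is the LDG scheme for the heat equation.) Let λ > 0, Δt > 0, let ρⁿ, g* ∈ V_h^k, and let r^{n+1} : Ω_x × ℝ → ℝ be of the form r^{n+1}(x,v) = M(v) Σ_{ℓ=0}^{N_v} c_ℓ(x) v^ℓ with c_ℓ ∈ V_h^k. Define r*(x,v) = ρⁿ(x)M(v) and j*(x,v) = −(vM(v)/λ) g*(x). Assume: (i) for every v ∈ ℝ and every η ∈ V_h^k, (j*(·,v), η) = −(v/λ) L⁺(r*(·,v), η); and (ii) for every v ∈ ℝ and every ξ ∈ V_h^k, ((r^{n+1}(·,v) − r*(·,v))/Δt, ξ) + v·L⁻(j*(·,v), ξ) = 0. Set ρ^{n+1}(x) = ∫_ℝ r^{n+1}(x,v) dv. Then ρ^{n+1} ∈ V_h^k and the pair (g*, ρ^{n+1}) satisfies the LDG scheme for the heat equation ∂_t ρ = D ∂_{xx} ρ with D = ∫_ℝ (v²M(v)/λ) dv = 1/λ; that is, for every η ∈ V_h^k, (g*, η) = L⁺(ρⁿ, η), and for every ξ ∈ V_h^k, ((ρ^{n+1} − ρⁿ)/Δt, ξ) = D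 · L⁻(g*, ξ). -/

import Mathlib

noncomputable section

open Polynomial MeasureTheory

namespace APDG

/-- Mesh size `h = 1/N` of the uniform partition of `Ω_x = [0,1]` into `N` cells. -/
def msize (N : ℕ) : ℝ := 1 / N

/-- A piecewise-polynomial function on the uniform mesh of `[0,1]` with `N` cells, recorded
by its polynomial on each cell `I_i = [i·h, (i+1)·h]` (indexed by `i : Fin N`). -/
abbrev PW (N : ℕ) := Fin N → Polynomial ℝ

/-- Membership in `V_h^k`: on each cell the polynomial has degree at most `k`. -/
def degLE (k : ℕ) {N : ℕ} (u : PW N) : Prop := ∀ i, (u i).degree ≤ (k : ℕ)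

/-- The one-sided limit `u⁺_{i-1/2}` from cell `I_i` at the interface `x_{i-1/2} = i·h`. -/
def uplus {N : ℕ} (u : PW N) (i : Fin N) : ℝ := (u i).eval ((i.val : ℝ) * msize N)

/-- The index `i - 1` modulo `N` (periodic boundary conditions). -/
def prevIdx {N : ℕ} (i : Fin N) : Fin N := ⟨(i.val + (N - 1)) % N, Nat.mod_lt _ i.pos⟩

/-- The one-sided limit `u⁻_{i-1/2}` from cell `I_{i-1}` at the interface `x_{i-1/2}`,
with periodic identification of cell indices modulo `N` (so for `i = 0` it is the value of
the polynomial of the last cell at the right endpoint `1`). -/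
def uminus {N : ℕ} (u : PW N) (i : Fin N) : ℝ :=
  (u (prevIdx i)).eval ((((prevIdx i).val : ℝ) + 1) * msize N)

/-- The jump `[u]_{i-1/2} = u⁺_{i-1/2} − u⁻_{i-1/2}`. -/
def jump {N : ℕ} (u : PW N) (i : Fin N) : ℝ := uplus u i - uminus u i

/-- The `L²(Ω_x)` inner product `(u,w) = ∫_{Ω_x} u w dx`, computed cell by cell. -/
def inner2 {N : ℕ} (u w : PW N) : ℝ :=
  ∑ i : Fin N,
    ∫ x in ((i.val : ℝ) * msize N)..(((i.val : ℝ) + 1) * msize N), (u i).eval x * (w i).eval x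

/-- `L⁺(ψ,u) = −∫_{Ω_x} ψ ∂ₓu dx − Σ_i ψ⁺_{i-1/2}[u]_{i-1/2}`. -/
def Lplus {N : ℕ} (ψ u : PW N) : ℝ :=
  - inner2 ψ (fun i => derivative (u i)) - ∑ i : Fin N, uplus ψ i * jump u i

/-- `L⁻(ψ,u) = −∫_{Ω_x} ψ ∂ₓu dx − Σ_i ψ⁻_{i-1/2}[u]_{i-1/2}`. -/
def Lminus {N : ℕ} (ψ u : PW N) : ℝ :=
  - inner2 ψ (fun i => derivative (u i)) - ∑ i : Fin N, uminus ψ i * jump u i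

/-- The one-dimensional normalized Maxwellian `M(v) = (2π)^{-1/2} exp(-v²/2)`. -/
def Mw (v : ℝ) : ℝ := (Real.sqrt (2 * Real.pi))⁻¹ * Real.exp (-(v ^ 2) / 2)

/-- The coefficient data of a function of *discrete ansatz form*
`f(x,v) = M(v) Σ_{ℓ=0}^{N_v} c_ℓ(x) v^ℓ`, with each `c_ℓ` piecewise polynomial. -/
abbrev Ansatz (N Nv : ℕ) := Fin (Nv + 1) → PW N

/-- All coefficients of the ansatz belong to `V_h^k`. -/
def AdegLE (k : ℕ) {N Nv : ℕ} (c : Ansatz N Nv) : Prop := ∀ ℓ, degLE k (c ℓ)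

/-- For fixed velocity `v`, the element `f(·,v) ∈ V_h^k` of an ansatz-form function:
on cell `i` it is the polynomial `M(v) Σ_ℓ v^ℓ c_ℓ`. -/
def aAt {N Nv : ℕ} (c : Ansatz N Nv) (v : ℝ) : PW N :=
  fun i => Polynomial.C (Mw v) * ∑ ℓ : Fin (Nv + 1), Polynomial.C (v ^ (ℓ : ℕ)) * c ℓ i

/-- The squared weighted phase-space norm
`|||f|||² = ∫_{Ω_x} ∫_ℝ f(x,v)² (λ/M(v)) dv dx` of an ansatz-form function. -/
def nrmSq {N Nv : ℕ} (lam : ℝ) (c : Ansatz N Nv) : ℝ :=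
  ∑ i : Fin N,
    ∫ x in ((i.val : ℝ) * msize N)..(((i.val : ℝ) + 1) * msize N),
      ∫ v : ℝ, ((aAt c v i).eval x) ^ 2 * (lam / Mw v)

/-! The data enter (i) and (ii) only through the scalar factors `M(v)`, `v M(v)` and `v² M(v)`,
since `L^±` and `(·,·)` are linear in their first argument. Evaluating (i) at `v = 1` and
cancelling `−M(1)/λ` gives the flux equation. Integrating (ii) over `v` turns `r^{n+1}` into
`ρ^{n+1} = Σ_ℓ m_ℓ c_ℓ` with the Gaussian moments `m_ℓ = ∫ v^ℓ M(v) dv`, `r*` into `ρⁿ`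
(as `m₀ = 1`), and `v · L⁻(j*, ξ) = −(v² M(v)/λ) L⁻(g*, ξ)` into `−D L⁻(g*, ξ)`. -/

open ProbabilityTheory

section Maxwellian

lemma Mw_pos (v : ℝ) : 0 < Mw v := by
  unfold Mw
  positivity

lemma Mw_eq_gaussianPDFReal : Mw = gaussianPDFReal 0 1 := by
  ext v
  simp [Mw, gaussianPDFReal_def]

lemma integrable_Mw : Integrable Mw := by
  rw [Mw_eq_gaussianPDFReal]
  exact integrable_gaussianPDFReal 0 1

lemma integral_Mw : ∫ v, Mw v = 1 := by
  rw [Mw_eq_gaussianPDFReal]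
  exact integral_gaussianPDFReal_eq_one 0 one_ne_zero

lemma integral_sq_mul_Mw : ∫ v, v ^ 2 * Mw v = 1 := by
  have h := variance_fun_id_gaussianReal (μ := 0) (v := 1)
  rw [variance_of_integral_eq_zero (by fun_prop) (by simp),
    integral_gaussianReal_eq_integral_smul one_ne_zero] at h
  simpa [Mw_eq_gaussianPDFReal, mul_comm] using h

lemma integrable_pow_mul_Mw (n : ℕ) : Integrable fun v : ℝ => v ^ n * Mw v := by
  have h := (integrable_rpow_mul_exp_neg_mul_sq (b := 1 / 2) (by norm_num) (s := n)
    (by linarith [n.cast_nonneg (α := ℝ)])).const_mul (Real.sqrt (2 * Real.pi))⁻¹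
  refine h.congr (ae_of_all _ fun v => ?_)
  simp only [Real.rpow_natCast, Mw]
  ring_nf

def moment (n : ℕ) : ℝ := ∫ v, v ^ n * Mw v

lemma integrable_Mw_mul_sum_pow {ι : Type*} (s : Finset ι) (e : ι → ℕ) (a : ι → ℝ) :
    Integrable fun v => Mw v * ∑ ℓ ∈ s, v ^ e ℓ * a ℓ := by
  simp_rw [Finset.mul_sum, mul_left_comm (Mw _), ← mul_assoc]
  exact integrable_finsetSum _ fun ℓ _ => (integrable_pow_mul_Mw (e ℓ)).mul_const _

lemma integral_Mw_mul_sum_pow {ι : Type*} (s : Finset ι) (e : ι → ℕ) (a : ι → ℝ) :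
    ∫ v, Mw v * ∑ ℓ ∈ s, v ^ e ℓ * a ℓ = ∑ ℓ ∈ s, moment (e ℓ) * a ℓ := by
  simp_rw [Finset.mul_sum, mul_left_comm (Mw _), ← mul_assoc]
  rw [integral_finsetSum _ fun ℓ _ => (integrable_pow_mul_Mw (e ℓ)).mul_const _]
  simp only [integral_mul_const, moment]

end Maxwellian

section Linearity

variable {N : ℕ}

lemma intervalIntegrable_eval_mul_eval (p q : ℝ[X]) (a b : ℝ) :
    IntervalIntegrable (fun x => p.eval x * q.eval x) volume a b :=
  (p.continuous.mul q.continuous).intervalIntegrable a b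

lemma inner2_C_mul_left (a : ℝ) (u w : PW N) :
    inner2 (fun i => C a * u i) w = a * inner2 u w := by
  simp only [inner2, eval_mul, eval_C, mul_assoc, intervalIntegral.integral_const_mul,
    Finset.mul_sum]

lemma inner2_sum_left {ι : Type*} (s : Finset ι) (f : ι → PW N) (w : PW N) :
    inner2 (fun i => ∑ j ∈ s, f j i) w = ∑ j ∈ s, inner2 (f j) w := by
  unfold inner2
  rw [Finset.sum_comm]
  refine Finset.sum_congr rfl fun i _ => ?_
  simp only [eval_finsetSum, Finset.sum_mul]
  exact intervalIntegral.integral_finsetSum fun j _ => intervalIntegrable_eval_mul_eval _ _ _ _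

lemma inner2_sub_left (u u' w : PW N) :
    inner2 (fun i => u i - u' i) w = inner2 u w - inner2 u' w := by
  unfold inner2
  rw [← Finset.sum_sub_distrib]
  refine Finset.sum_congr rfl fun i _ => ?_
  simp only [eval_sub, sub_mul]
  exact intervalIntegral.integral_sub (intervalIntegrable_eval_mul_eval _ _ _ _)
    (intervalIntegrable_eval_mul_eval _ _ _ _)

lemma Lplus_C_mul_left (a : ℝ) (ψ u : PW N) :
    Lplus (fun i => C a * ψ i) u = a * Lplus ψ u := by
  simp only [Lplus, inner2_C_mul_left, uplus, eval_mul, eval_C, mul_assoc, ← Finset.mul_sum]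
  ring

lemma Lminus_C_mul_left (a : ℝ) (ψ u : PW N) :
    Lminus (fun i => C a * ψ i) u = a * Lminus ψ u := by
  simp only [Lminus, inner2_C_mul_left, uminus, eval_mul, eval_C, mul_assoc, ← Finset.mul_sum]
  ring

end Linearity

section Density

variable {N Nv : ℕ}

def density (c : Ansatz N Nv) : PW N := fun i => ∑ ℓ : Fin (Nv + 1), C (moment ℓ) * c ℓ i

lemma degLE_density {k : ℕ} {c : Ansatz N Nv} (hc : AdegLE k c) : degLE k (density c) := by
  intro i
  refine (degree_sum_le _ _).trans (Finset.sup_le fun ℓ _ => ?_)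
  rw [← smul_eq_C_mul]
  exact (degree_smul_le _ _).trans (hc ℓ i)

lemma eval_aAt (c : Ansatz N Nv) (v : ℝ) (i : Fin N) (x : ℝ) :
    (aAt c v i).eval x = Mw v * ∑ ℓ : Fin (Nv + 1), v ^ (ℓ : ℕ) * (c ℓ i).eval x := by
  simp [aAt, eval_finsetSum]

lemma inner2_aAt (c : Ansatz N Nv) (v : ℝ) (ξ : PW N) :
    inner2 (aAt c v) ξ = Mw v * ∑ ℓ : Fin (Nv + 1), v ^ (ℓ : ℕ) * inner2 (c ℓ) ξ := by
  unfold aAt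
  rw [inner2_C_mul_left, inner2_sum_left]
  simp only [inner2_C_mul_left]

lemma integral_eval_aAt (c : Ansatz N Nv) (i : Fin N) (x : ℝ) :
    ∫ v, (aAt c v i).eval x = (density c i).eval x := by
  simp [eval_aAt, integral_Mw_mul_sum_pow, density, eval_finsetSum]

lemma integrable_inner2_aAt (c : Ansatz N Nv) (ξ : PW N) :
    Integrable fun v => inner2 (aAt c v) ξ := by
  simp only [inner2_aAt]
  exact integrable_Mw_mul_sum_pow _ _ _

lemma integral_inner2_aAt (c : Ansatz N Nv) (ξ : PW N) :
    ∫ v, inner2 (aAt c v) ξ = inner2 (density c) ξ := by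
  simp only [inner2_aAt, integral_Mw_mul_sum_pow]
  unfold density
  rw [inner2_sum_left]
  simp only [inner2_C_mul_left]

end Density

theorem asymptotic_preserving_limit_general (k Nv N : ℕ)
    (lam Δt : ℝ) (hlam : 0 < lam)
    (rhon gs : PW N)
    (c : Ansatz N Nv) (hc : AdegLE k c)
    -- (i): (j*(·,v), η) = −(v/λ) L⁺(r*(·,v), η) for every v and every η ∈ V_h^k
    (hi : ∀ v : ℝ, ∀ η : PW N, degLE k η →
      inner2 (fun i => Polynomial.C (-(v * Mw v) / lam) * gs i) η
        = -(v / lam) * Lplus (fun i => Polynomial.C (Mw v) * rhon i) η)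
    -- (ii): ((r^{n+1}(·,v) − r*(·,v))/Δt, ξ) + v·L⁻(j*(·,v), ξ) = 0 for every v, ξ ∈ V_h^k
    (hii : ∀ v : ℝ, ∀ ξ : PW N, degLE k ξ →
      Δt⁻¹ * inner2 (fun i => aAt c v i - Polynomial.C (Mw v) * rhon i) ξ
        + v * Lminus (fun i => Polynomial.C (-(v * Mw v) / lam) * gs i) ξ = 0) :
    (∀ η : PW N, degLE k η → inner2 gs η = Lplus rhon η) ∧
    ∃ q : PW N, degLE k q ∧
      (∀ (i : Fin N) (x : ℝ), (q i).eval x = ∫ v : ℝ, (aAt c v i).eval x) ∧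
      (∫ v : ℝ, v ^ 2 * Mw v / lam) = 1 / lam ∧
      (∀ ξ : PW N, degLE k ξ →
        Δt⁻¹ * inner2 (fun i => q i - rhon i) ξ
          = (∫ v : ℝ, v ^ 2 * Mw v / lam) * Lminus gs ξ) := by
  have hD : ∫ v : ℝ, v ^ 2 * Mw v / lam = 1 / lam := by
    rw [integral_div, integral_sq_mul_Mw]
  refine ⟨fun η hη => ?_, density c, degLE_density hc,
    fun i x => (integral_eval_aAt c i x).symm, hD, fun ξ hξ => ?_⟩
  · have h := hi 1 η hη
    rw [inner2_C_mul_left, Lplus_C_mul_left] at h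
    have hM : -(1 * Mw 1) / lam ≠ 0 := div_ne_zero (by simp [(Mw_pos 1).ne']) hlam.ne'
    exact mul_left_cancel₀ hM (h.trans (by ring))
  · have hpointwise : ∀ v, Δt⁻¹ * (inner2 (aAt c v) ξ - Mw v * inner2 rhon ξ)
        = v ^ 2 * Mw v / lam * Lminus gs ξ := by
      intro v
      have h := hii v ξ hξ
      rw [inner2_sub_left, inner2_C_mul_left, Lminus_C_mul_left] at h
      linear_combination h
    calc Δt⁻¹ * inner2 (fun i => density c i - rhon i) ξ
        = ∫ v, Δt⁻¹ * (inner2 (aAt c v) ξ - Mw v * inner2 rhon ξ) := by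
          rw [integral_const_mul, integral_sub (integrable_inner2_aAt c ξ)
            (integrable_Mw.mul_const _), integral_inner2_aAt, integral_mul_const, integral_Mw,
            one_mul, inner2_sub_left]
      _ = _ := by
          simp_rw [hpointwise]
          exact integral_mul_const _ _

/-- **Asymptotic-preserving property: the formal `ε → 0` limit scheme is the LDG scheme
for the heat equation.** With `r*(x,v) = ρⁿ(x)M(v)` and `j*(x,v) = −(vM(v)/λ)g*(x)`,
if `(j*(·,v), η) = −(v/λ)L⁺(r*(·,v), η)` for all `v, η` and
`((r^{n+1}(·,v) − r*(·,v))/Δt, ξ) + v·L⁻(j*(·,v), ξ) = 0` for all `v, ξ`, then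
`ρ^{n+1}(x) = ∫_ℝ r^{n+1}(x,v) dv` belongs to `V_h^k` and `(g*, ρ^{n+1})` satisfies the
LDG scheme for the heat equation `∂_t ρ = D ∂_{xx} ρ` with
`D = ∫_ℝ v²M(v)/λ dv = 1/λ`: `(g*, η) = L⁺(ρⁿ, η)` and
`((ρ^{n+1} − ρⁿ)/Δt, ξ) = D·L⁻(g*, ξ)` for all test functions in `V_h^k`. -/
theorem asymptotic_preserving_limit (k Nv N : ℕ) (hN : 0 < N)
    (lam Δt : ℝ) (hlam : 0 < lam) (hΔt : 0 < Δt)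
    (rhon gs : PW N) (hrhon : degLE k rhon) (hgs : degLE k gs)
    (c : Ansatz N Nv) (hc : AdegLE k c)
    -- (i): (j*(·,v), η) = −(v/λ) L⁺(r*(·,v), η) for every v and every η ∈ V_h^k
    (hi : ∀ v : ℝ, ∀ η : PW N, degLE k η →
      inner2 (fun i => Polynomial.C (-(v * Mw v) / lam) * gs i) η
        = -(v / lam) * Lplus (fun i => Polynomial.C (Mw v) * rhon i) η)
    -- (ii): ((r^{n+1}(·,v) − r*(·,v))/Δt, ξ) + v·L⁻(j*(·,v), ξ) = 0 for every v, ξ ∈ V_h^k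
    (hii : ∀ v : ℝ, ∀ ξ : PW N, degLE k ξ →
      Δt⁻¹ * inner2 (fun i => aAt c v i - Polynomial.C (Mw v) * rhon i) ξ
        + v * Lminus (fun i => Polynomial.C (-(v * Mw v) / lam) * gs i) ξ = 0) :
    (∀ η : PW N, degLE k η → inner2 gs η = Lplus rhon η) ∧
    ∃ q : PW N, degLE k q ∧
      (∀ (i : Fin N) (x : ℝ), (q i).eval x = ∫ v : ℝ, (aAt c v i).eval x) ∧
      (∫ v : ℝ, v ^ 2 * Mw v / lam) = 1 / lam ∧
      (∀ ξ : PW N, degLE k ξ →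
        Δt⁻¹ * inner2 (fun i => q i - rhon i) ξ
          = (∫ v : ℝ, v ^ 2 * Mw v / lam) * Lminus gs ξ) :=
  asymptotic_preserving_limit_general k Nv N lam Δt hlam rhon gs c hc hi hii

end APDG
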